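/- Under the growth condition (there exist b, c > 0 with F(z') − F(z) ≥ c(z'−z) for z ≤ z' in [ν−b, ν+b], ν = V@R_α^P(Z)), for any δ > 0, ε ∈ (0, b) and sample size N ≥ (1/2)c⁻²ε⁻²log(2/δ), the empirical Value-at-Risk satisfies P(|V@R_α^{P_N} − V@R_α^P(Z)| < ε) ≥ 1 − δ. -/

import Mathlib

/-!
The lower quantile is stable under uniform perturbation of the distribution function: if
`|G - F| ≤ c ε'` everywhere and `F` grows at rate `c` on `[ν - b, ν + b]` with `ε' < b`, then the
`p`-quantiles of `F` and `G` differ by at most `ε'`. By DKW, the empirical cdf is this close to `F`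
outside an event of probability at most `2 exp (-2 N (c ε')²)`. This only gives `≤ ε'`, so it is
applied for every `ε' < ε` and the bound is passed to the limit `ε' → ε`; the sample size
condition makes `2 exp (-2 N (c ε)²) ≤ δ`.
-/

open MeasureTheory ProbabilityTheory

/-- Empirical cdf from samples `Z 0, ..., Z (N-1)`. -/
noncomputable def empCdf {Ω : Type*} (Z : ℕ → Ω → ℝ) (N : ℕ) (ω : Ω) (z : ℝ) : ℝ :=
  (N : ℝ)⁻¹ * ∑ i ∈ Finset.range N, if Z i ω ≤ z then (1 : ℝ) else 0

open Filter Set Real Topology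

noncomputable def quantile (G : ℝ → ℝ) (p : ℝ) : ℝ :=
  sInf {z | p ≤ G z}

section Quantile

variable {F G : ℝ → ℝ} {p : ℝ}

lemma nonempty_setOf_le_of_tendsto_atTop (hG : Tendsto G atTop (𝓝 1)) (hp : p < 1) :
    {z | p ≤ G z}.Nonempty :=
  ((hG.eventually (eventually_gt_nhds hp)).exists).imp fun _ => le_of_lt

lemma bddBelow_setOf_le_of_tendsto_atBot (hG : Tendsto G atBot (𝓝 0)) (hp : 0 < p) :
    BddBelow {z | p ≤ G z} := by
  obtain ⟨x, hx⟩ := eventually_atBot.1 (hG.eventually (eventually_lt_nhds hp))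
  exact ⟨x, fun z hz => le_of_not_gt fun hzx => (hx z hzx.le).not_ge hz⟩

lemma apply_lt_of_lt_quantile (hbdd : BddBelow {z | p ≤ G z}) {z : ℝ} (hz : z < quantile G p) :
    G z < p :=
  lt_of_not_ge fun h => hz.not_ge (csInf_le hbdd h)

variable {b c ε : ℝ}

/-- `F` is not assumed right-continuous, so `p ≤ F (quantile F p)` is unavailable; instead points
of `{z | p ≤ F z}` arbitrarily close to the quantile are used. -/
lemma add_mul_le_apply_quantile_add (hne : {z | p ≤ F z}.Nonempty)
    (hbdd : BddBelow {z | p ≤ F z}) (hc : 0 < c) (hε : 0 < ε) (hεb : ε ≤ b)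
    (hgrowth : ∀ z z', quantile F p - b ≤ z → z ≤ z' → z' ≤ quantile F p + b →
      c * (z' - z) ≤ F z' - F z) :
    p + c * ε ≤ F (quantile F p + ε) := by
  set x := quantile F p + ε with hx
  by_contra! hlt
  have hgap : (F x - p) / c < ε := (div_lt_iff₀ hc).2 (by linarith)
  obtain ⟨z, hz, hzlt⟩ := exists_lt_of_csInf_lt hne
    (show quantile F p < min (x - (F x - p) / c) x from lt_min (by linarith) (by linarith))
  rw [lt_min_iff] at hzlt
  have hνz : quantile F p ≤ z := csInf_le hbdd hz
  have hzx := hgrowth z x (by linarith) hzlt.2.le (by linarith)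
  have : F x - p < c * (x - z) := by
    rw [← div_lt_iff₀' hc]; linarith
  linarith [show p ≤ F z from hz]

lemma apply_lt_sub_of_lt_quantile_sub (hF : Monotone F) (hbdd : BddBelow {z | p ≤ F z})
    (hε : 0 < ε) (hεb : ε < b)
    (hgrowth : ∀ z z', quantile F p - b ≤ z → z ≤ z' → z' ≤ quantile F p + b →
      c * (z' - z) ≤ F z' - F z)
    {s : ℝ} (hs : s < quantile F p - ε) :
    F s < p - c * ε := by
  set t := max s (quantile F p - b)
  have ht : t < quantile F p - ε := max_lt hs (by linarith)
  have hgrow := hgrowth t (t + ε) (le_max_right _ _) (by linarith) (by linarith)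
  have hlt := apply_lt_of_lt_quantile hbdd (show t + ε < quantile F p by linarith)
  linarith [hF (le_max_left s (quantile F p - b))]

theorem abs_quantile_sub_le_of_forall_abs_sub_le (hF : Monotone F)
    (hFne : {z | p ≤ F z}.Nonempty) (hFbdd : BddBelow {z | p ≤ F z})
    (hGne : {z | p ≤ G z}.Nonempty) (hGbdd : BddBelow {z | p ≤ G z})
    (hc : 0 < c) (hε : 0 < ε) (hεb : ε < b)
    (hgrowth : ∀ z z', quantile F p - b ≤ z → z ≤ z' → z' ≤ quantile F p + b →
      c * (z' - z) ≤ F z' - F z)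
    (hclose : ∀ z, |G z - F z| ≤ c * ε) :
    |quantile G p - quantile F p| ≤ ε := by
  rw [abs_sub_le_iff, sub_le_iff_le_add', sub_le_comm]
  constructor
  · refine csInf_le hGbdd (show p ≤ G _ from ?_)
    have := add_mul_le_apply_quantile_add hFne hFbdd hc hε hεb.le hgrowth
    linarith [(abs_le.1 (hclose (quantile F p + ε))).1]
  · refine le_csInf hGne fun s hs => le_of_not_gt fun hlt => ?_
    have := apply_lt_sub_of_lt_quantile_sub hF hFbdd hε hεb hgrowth hlt
    linarith [(abs_le.1 (hclose s)).2, show p ≤ G s from hs]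

end Quantile

section EmpiricalCdf

variable {Ω : Type*} (Z : ℕ → Ω → ℝ) (N : ℕ) (ω : Ω)

lemma tendsto_empCdf_atTop (hN : N ≠ 0) : Tendsto (empCdf Z N ω) atTop (𝓝 1) := by
  refine tendsto_const_nhds.congr' ?_
  filter_upwards [(eventually_all_finset (Finset.range N)).2 fun i _ =>
    eventually_ge_atTop (Z i ω)] with z hz
  rw [empCdf, Finset.sum_congr rfl fun i hi => if_pos (hz i hi)]
  simp [hN]

lemma tendsto_empCdf_atBot : Tendsto (empCdf Z N ω) atBot (𝓝 0) := by
  refine tendsto_const_nhds.congr' ?_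
  filter_upwards [(eventually_all_finset (Finset.range N)).2 fun i _ =>
    eventually_lt_atBot (Z i ω)] with z hz
  rw [empCdf, Finset.sum_congr rfl fun i hi => if_neg (hz i hi).not_ge]
  simp

end EmpiricalCdf

lemma one_sub_measureReal_le_of_compl_subset {Ω : Type*} [MeasurableSpace Ω] {P : Measure Ω}
    [IsProbabilityMeasure P] {A B : Set Ω} (h : Bᶜ ⊆ A) : 1 - P.real B ≤ P.real A := by
  have : 1 ≤ P.real A + P.real B := calc
    1 = P.real univ := probReal_univ.symm
    _ ≤ P.real (A ∪ B) := measureReal_mono fun ω _ => (em (ω ∈ B)).elim Or.inr (Or.inl ∘ @h ω)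
    _ ≤ P.real A + P.real B := measureReal_union_le A B
  linarith

lemma two_mul_exp_neg_le_of_log_le {n η δ : ℝ} (hδ : 0 < δ) (hη : 0 < η)
    (hn : 1 / 2 * η⁻¹ ^ 2 * log (2 / δ) ≤ n) :
    2 * exp (-2 * n * η ^ 2) ≤ δ := by
  have hlog : log (2 / δ) ≤ 2 * n * η ^ 2 := by
    have := mul_le_mul_of_nonneg_left hn (by positivity : 0 ≤ 2 * η ^ 2)
    rw [show 2 * η ^ 2 * (1 / 2 * η⁻¹ ^ 2 * log (2 / δ)) = log (2 / δ) by field_simp] at this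
    linarith
  calc 2 * exp (-2 * n * η ^ 2) ≤ 2 * exp (-log (2 / δ)) := by gcongr; linarith
    _ = δ := by rw [exp_neg, exp_log (by positivity)]; field_simp

theorem stmt_9_general {Ω : Type*} [MeasurableSpace Ω] (P : Measure Ω) [IsProbabilityMeasure P]
    (μ : Measure ℝ) [IsProbabilityMeasure μ]
    (Z : ℕ → Ω → ℝ)
    (α : ℝ) (hα : α ∈ Set.Ioo (0 : ℝ) 1)
    (F : ℝ → ℝ) (hF : F = fun z => (μ (Set.Iic z)).toReal)
    (ν : ℝ) (hν : ν = sInf {z : ℝ | 1 - α ≤ F z})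
    (b c : ℝ) (hc : 0 < c)
    (hgrowth : ∀ z z', ν - b ≤ z → z ≤ z' → z' ≤ ν + b → c * (z' - z) ≤ F z' - F z)
    (N : ℕ) (hN : 0 < N)
    (hDKW : ∀ ε : ℝ, 0 < ε →
      (P {ω | ∃ z : ℝ, ε < |empCdf Z N ω z - F z|}).toReal ≤
        2 * Real.exp (-2 * N * ε ^ 2))
    (δ : ℝ) (hδ : 0 < δ) (ε : ℝ) (hε : ε ∈ Set.Ioo 0 b)
    (hNsize : (1 / 2) * c⁻¹ ^ 2 * ε⁻¹ ^ 2 * Real.log (2 / δ) ≤ N) :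
    1 - δ ≤ (P {ω | |sInf {z : ℝ | 1 - α ≤ empCdf Z N ω z} - ν| < ε}).toReal := by
  obtain ⟨hα0, hα1⟩ := hα
  obtain ⟨hε0, hεb⟩ := hε
  obtain rfl : F = cdf μ := hF.trans (funext fun z => (cdf_eq_real μ z).symm)
  subst hν
  change 1 - δ ≤
    P.real {ω | |quantile (empCdf Z N ω) (1 - α) - quantile (cdf μ) (1 - α)| < ε}
  have hA : ∀ ε' ∈ Ioo 0 ε, 1 - 2 * exp (-2 * N * (c * ε') ^ 2) ≤
      P.real {ω | |quantile (empCdf Z N ω) (1 - α) - quantile (cdf μ) (1 - α)| < ε} := by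
    rintro ε' ⟨hε'0, hε'ε⟩
    refine (sub_le_sub_left (hDKW _ (by positivity)) 1).trans
      (one_sub_measureReal_le_of_compl_subset fun ω hω => ?_)
    simp only [mem_compl_iff, mem_ofPred_eq, not_exists, not_lt] at hω
    refine lt_of_le_of_lt ?_ hε'ε
    exact abs_quantile_sub_le_of_forall_abs_sub_le (p := 1 - α) (monotone_cdf μ)
      (nonempty_setOf_le_of_tendsto_atTop (tendsto_cdf_atTop μ) (by linarith))
      (bddBelow_setOf_le_of_tendsto_atBot (tendsto_cdf_atBot μ) (by linarith))
      (nonempty_setOf_le_of_tendsto_atTop (tendsto_empCdf_atTop Z N ω hN.ne') (by linarith))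
      (bddBelow_setOf_le_of_tendsto_atBot (tendsto_empCdf_atBot Z N ω) (by linarith))
      hc hε'0 (hε'ε.trans hεb) hgrowth hω
  have hlim := le_of_tendsto ((Continuous.tendsto (by fun_prop) ε).mono_left nhdsWithin_le_nhds)
    (eventually_of_mem (Ioo_mem_nhdsLT hε0) hA)
  linarith [two_mul_exp_neg_le_of_log_le hδ (mul_pos hc hε0) (le_of_eq_of_le (by ring) hNsize)]

/-- Under the local growth condition, for `ε ∈ (0,b)`, `δ > 0` and
`N ≥ (1/2) c⁻² ε⁻² log(2/δ)`, the empirical Value-at-Risk is within `ε`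
of the true Value-at-Risk with probability at least `1 - δ`. -/
theorem stmt_9 {Ω : Type*} [MeasurableSpace Ω] (P : Measure Ω) [IsProbabilityMeasure P]
    (μ : Measure ℝ) [IsProbabilityMeasure μ]
    (Z : ℕ → Ω → ℝ) (hmeas : ∀ i, Measurable (Z i))
    (hlaw : ∀ i, Measure.map (Z i) P = μ)
    (hindep : iIndepFun Z P)
    (α : ℝ) (hα : α ∈ Set.Ioo (0 : ℝ) 1)
    (F : ℝ → ℝ) (hF : F = fun z => (μ (Set.Iic z)).toReal)
    (ν : ℝ) (hν : ν = sInf {z : ℝ | 1 - α ≤ F z})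
    (b c : ℝ) (hb : 0 < b) (hc : 0 < c)
    (hgrowth : ∀ z z', ν - b ≤ z → z ≤ z' → z' ≤ ν + b → c * (z' - z) ≤ F z' - F z)
    (N : ℕ) (hN : 0 < N)
    (hDKW : ∀ ε : ℝ, 0 < ε →
      (P {ω | ∃ z : ℝ, ε < |empCdf Z N ω z - F z|}).toReal ≤
        2 * Real.exp (-2 * N * ε ^ 2))
    (δ : ℝ) (hδ : 0 < δ) (ε : ℝ) (hε : ε ∈ Set.Ioo 0 b)
    (hNsize : (1 / 2) * c⁻¹ ^ 2 * ε⁻¹ ^ 2 * Real.log (2 / δ) ≤ N) :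
    1 - δ ≤ (P {ω | |sInf {z : ℝ | 1 - α ≤ empCdf Z N ω z} - ν| < ε}).toReal :=
  stmt_9_general P μ Z α hα F hF ν hν b c hc hgrowth N hN hDKW δ hδ ε hε hNsize
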